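/- arXiv:1910.08764 — 3 statements merged into one kernel-verified Lean document; each statement's English description precedes it below -/
import Mathlib

section
/- Let n ≥ 2 be a natural number and let a be a complex number with |a| = 1 satisfying: if n is even then Re(a) ≥ 0 and N = n/2; if n is odd then Re(a) = 0 and N = (n+1)/2 when a = i, N = (n-1)/2 when a = -i. Then there are exactly n - N real values θ in the interval [-(2n-1)π/(2n), -π/(2n)] satisfying e^{inθ} = -1/a. -/
/-!
Since `‖a‖ = 1`, the solutions of `exp (I * n * θ) = -1 / a` are the distinct angles
`θ_k = (π - arg a + 2kπ) / n`, `k ∈ ℤ`. Multiplying by `2n / π`, with `x = 2 arg a / π`, the angle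
`θ_k` lies in the interval exactly when `x - 2n - 1 ≤ 4k ≤ x - 3`. The case hypotheses force
`x ∈ [-1, 1]` (and `x = ±1` when `n` is odd), so these `k` run from `-(n - N)` to `-1`.
-/

open Complex Set

lemma exp_mul_I_eq_neg_one_div_iff {a : ℂ} (ha : ‖a‖ = 1) (x : ℝ) :
    exp (x * I) = -1 / a ↔ ∃ k : ℤ, x = Real.pi - a.arg + k * (2 * Real.pi) := by
  have ha' : exp (a.arg * I) = a := by
    simpa [ha] using norm_mul_exp_arg_mul_I a
  have : -1 / a = exp ((Real.pi - a.arg : ℝ) * I) := by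
    rw [ofReal_sub, sub_mul, exp_sub, exp_pi_mul_I, ha']
  rw [this, exp_eq_exp_iff_exists_int]
  refine exists_congr fun k => ?_
  rw [show ((Real.pi - a.arg : ℝ) : ℂ) * I + k * (2 * Real.pi * I) =
      ((Real.pi - a.arg + k * (2 * Real.pi) : ℝ) : ℂ) * I by push_cast; ring,
    mul_left_inj' I_ne_zero, ofReal_inj]

lemma eq_I_or_eq_neg_I_of_re_eq_zero {a : ℂ} (ha : ‖a‖ = 1) (hre : a.re = 0) :
    a = I ∨ a = -I := by
  have him : a.im ^ 2 = 1 := by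
    simpa [hre, ha] using (sq_norm_sub_sq_re a).symm
  rcases sq_eq_one_iff.mp him with h | h
  · exact Or.inl (Complex.ext hre h)
  · exact Or.inr (Complex.ext (by simpa using hre) (by simpa using h))

lemma abs_two_mul_arg_div_pi_le_one {a : ℂ} (hre : 0 ≤ a.re) : |2 * a.arg / Real.pi| ≤ 1 := by
  have := abs_arg_le_pi_div_two_iff.mpr hre
  rw [abs_div, abs_mul, abs_two, abs_of_pos Real.pi_pos, div_le_one Real.pi_pos]
  linarith

lemma ncard_setOf_le_mul_int_le {d : ℝ} (hd : 0 < d) (A B : ℝ) :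
    {k : ℤ | A ≤ d * k ∧ d * k ≤ B}.ncard = (⌊B / d⌋ + 1 - ⌈A / d⌉).toNat := by
  have : {k : ℤ | A ≤ d * k ∧ d * k ≤ B} = Icc ⌈A / d⌉ ⌊B / d⌋ := by
    ext k
    rw [mem_ofPred_eq, mem_Icc, Int.ceil_le, Int.le_floor, div_le_iff₀' hd, le_div_iff₀' hd]
  rw [this, ← Finset.coe_Icc, ncard_coe_finset, Int.card_Icc]

lemma setOf_mem_and_exp_eq_neg_one_div {n : ℕ} (hn : n ≠ 0) {a : ℂ} (ha : ‖a‖ = 1) (s : Set ℝ) :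
    {θ : ℝ | θ ∈ s ∧ exp (I * n * θ) = -1 / a} =
      (fun k : ℤ => (Real.pi - a.arg + k * (2 * Real.pi)) / n) ''
        {k : ℤ | (Real.pi - a.arg + k * (2 * Real.pi)) / n ∈ s} := by
  have hn' : (n : ℝ) ≠ 0 := Nat.cast_ne_zero.mpr hn
  ext θ
  rw [mem_ofPred_eq, mul_assoc, mul_comm, ← ofReal_natCast, ← ofReal_mul,
    exp_mul_I_eq_neg_one_div_iff ha]
  constructor
  · rintro ⟨hθ, k, hk⟩
    have : (Real.pi - a.arg + k * (2 * Real.pi)) / n = θ := by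
      rw [← hk]; field_simp
    exact ⟨k, by rwa [mem_ofPred_eq, this], this⟩
  · rintro ⟨k, hk, rfl⟩
    exact ⟨hk, k, by field_simp⟩

lemma ncard_setOf_mem_and_exp_eq_neg_one_div {n : ℕ} (hn : n ≠ 0) {a : ℂ} (ha : ‖a‖ = 1)
    (s : Set ℝ) :
    {θ : ℝ | θ ∈ s ∧ exp (I * n * θ) = -1 / a}.ncard =
      {k : ℤ | (Real.pi - a.arg + k * (2 * Real.pi)) / n ∈ s}.ncard := by
  have hmono : StrictMono fun k : ℤ => (Real.pi - a.arg + k * (2 * Real.pi)) / n := by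
    intro k l hkl
    have : (k : ℝ) < l := by exact_mod_cast hkl
    have hn' : (0 : ℝ) < n := by positivity
    have := Real.pi_pos
    simp only
    gcongr
  rw [setOf_mem_and_exp_eq_neg_one_div hn ha, ncard_image_of_injective _ hmono.injective]

lemma div_natCast_mem_Icc_iff {n : ℕ} (hn : n ≠ 0) (a : ℂ) (k : ℤ) :
    (Real.pi - a.arg + k * (2 * Real.pi)) / n ∈
        Icc (-(2 * (n : ℝ) - 1) * Real.pi / (2 * n)) (-Real.pi / (2 * n)) ↔
      2 * a.arg / Real.pi - 2 * n - 1 ≤ 4 * k ∧ 4 * k ≤ 2 * a.arg / Real.pi - 3 := by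
  have hn' : (n : ℝ) ≠ 0 := Nat.cast_ne_zero.mpr hn
  have hc : 0 < Real.pi / (2 * n) := by positivity
  set x := 2 * a.arg / Real.pi
  have hθ : (Real.pi - a.arg + k * (2 * Real.pi)) / n = Real.pi / (2 * n) * (2 - x + 4 * k) := by
    simp only [x]; field_simp; ring
  have hL : -(2 * (n : ℝ) - 1) * Real.pi / (2 * n) = Real.pi / (2 * n) * -(2 * n - 1) := by ring
  have hU : -Real.pi / (2 * n) = Real.pi / (2 * n) * -1 := by ring
  rw [hθ, hL, hU, mem_Icc, mul_le_mul_iff_right₀ hc, mul_le_mul_iff_right₀ hc]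
  constructor <;> rintro ⟨h₁, h₂⟩ <;> constructor <;> linarith

theorem stmt0 (n N : ℕ) (hn : 2 ≤ n) (a : ℂ) (ha : ‖a‖ = 1)
    (heven : Even n → 0 ≤ a.re ∧ N = n / 2)
    (hodd : Odd n → a.re = 0 ∧ (a = I → N = (n + 1) / 2) ∧ (a = -I → N = (n - 1) / 2)) :
    {θ : ℝ | θ ∈ Icc (-(2 * (n : ℝ) - 1) * Real.pi / (2 * n)) (-Real.pi / (2 * n)) ∧
        Complex.exp (I * n * θ) = -1 / a}.ncard = n - N := by
  have hn₀ : n ≠ 0 := by omega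
  simp_rw [ncard_setOf_mem_and_exp_eq_neg_one_div hn₀ ha, div_natCast_mem_Icc_iff hn₀]
  rw [ncard_setOf_le_mul_int_le four_pos]
  rcases Nat.even_or_odd' n with ⟨m, rfl | rfl⟩
  · obtain ⟨hre, rfl⟩ := heven (even_two_mul m)
    have hx := abs_le.mp (abs_two_mul_arg_div_pi_le_one hre)
    rw [(Int.ceil_eq_iff (z := -m)).mpr, (Int.floor_eq_iff (z := -1)).mpr]
    · omega
    all_goals push_cast; constructor <;> linarith
  · obtain ⟨hre, hN_I, hN_neg_I⟩ := hodd (odd_two_mul_add_one m)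
    rcases eq_I_or_eq_neg_I_of_re_eq_zero ha hre with rfl | rfl
    · obtain rfl := hN_I rfl
      rw [arg_I, show 2 * (Real.pi / 2) / Real.pi = 1 by field_simp,
        (Int.ceil_eq_iff (z := -m)).mpr, (Int.floor_eq_iff (z := -1)).mpr]
      · omega
      all_goals push_cast; constructor <;> linarith
    · obtain rfl := hN_neg_I rfl
      rw [arg_neg_I, show 2 * -(Real.pi / 2) / Real.pi = -1 by field_simp,
        (Int.ceil_eq_iff (z := -m - 1)).mpr, (Int.floor_eq_iff (z := -1)).mpr]
      · omega
      all_goals push_cast; constructor <;> linarith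
end

section
/- Let n ≥ 2, T > t ≥ 0, and θ ∈ [-(2n-1)π/(2n), -π/(2n)]. Suppose φ and φ' are in L¹[0,∞). Then ∫_{-∞}^∞ e^{iρ(T-t)} φ̂( e^{iθ}(−iρ)^{1/n} ) dρ = 0, where φ̂(λ) = ∫₀^∞ e^{-iλx} φ(x) dx. -/
/-!
For `Im l ≤ 0` the integral `φ̂ l = ∫₀^∞ e^{-ilx} φ x dx` converges absolutely, and `φ̂` is
continuous on the closed lower half-plane, holomorphic in its interior, and tends to `0` at
infinity there: on each horizontal line this is the Riemann–Lebesgue lemma for `e^{bx} φ`, and it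
becomes uniform because `b ↦ e^{bx} φ` is continuous in `L¹` and tends to `0` as `b → -∞`.
The condition on `θ` makes `λ ρ = e^{iθ} (-iρ)^{1/n}` map the closed (open) upper half-plane into
the closed (open) lower half-plane, with `|λ ρ| = |ρ|^{1/n}`. So `F ρ = e^{iρ(T-t)} φ̂ (λ ρ)` is
holomorphic in the upper half-plane, continuous up to `ℝ`, and `|F ρ| ≤ e^{-(T-t) Im ρ} o(1)`.
Cauchy's theorem on the rectangles `[-R, R] × [0, H]`, with `H` large compared to `R`, then
forces `∫_{-R}^{R} F → 0` (Jordan's lemma).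
-/

open Complex MeasureTheory Set Filter Topology Bornology
open scoped FourierTransform Real

section RealAnalysis

lemma mul_exp_mul_le_inv {b c x : ℝ} (hc : 0 < c) (hb : b ≤ -c) (hx : 0 ≤ x) :
    x * Real.exp (b * x) ≤ c⁻¹ := by
  rw [← one_div, le_div_iff₀ hc]
  calc x * Real.exp (b * x) * c ≤ Real.exp (c * x) * Real.exp (b * x) := by
        rw [mul_right_comm]
        gcongr
        linarith [Real.add_one_le_exp (c * x)]
    _ ≤ 1 := by
        rw [← Real.exp_add, Real.exp_le_one_iff]
        nlinarith

lemma abs_exp_sub_exp_le {u v : ℝ} (hu : u ≤ 0) (hv : v ≤ 0) :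
    |Real.exp u - Real.exp v| ≤ 1 - Real.exp (-|u - v|) := by
  wlog h : v ≤ u generalizing u v
  · rw [abs_sub_comm, abs_sub_comm u]
    exact this hv hu (le_of_not_ge h)
  rw [abs_of_nonneg (sub_nonneg.2 (Real.exp_le_exp.2 h)), abs_of_nonneg (sub_nonneg.2 h), neg_sub]
  have h₁ : Real.exp u ≤ 1 := Real.exp_le_one_iff.2 hu
  have h₂ : Real.exp (v - u) ≤ 1 := Real.exp_le_one_iff.2 (by linarith)
  calc Real.exp u - Real.exp v = Real.exp u * (1 - Real.exp (v - u)) := by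
        rw [mul_sub, ← Real.exp_add]; ring_nf
    _ ≤ 1 - Real.exp (v - u) := mul_le_of_le_one_left (by linarith) h₁

lemma abs_one_sub_exp_neg_mul_le_one {δ x : ℝ} (hδ : 0 ≤ δ) (hx : 0 ≤ x) :
    |1 - Real.exp (-δ * x)| ≤ 1 := by
  have : Real.exp (-δ * x) ≤ 1 := Real.exp_le_one_iff.2 (by nlinarith)
  rw [abs_le]
  constructor <;> linarith [Real.exp_pos (-δ * x)]

lemma tendsto_integral_exp_mul_mul_atBot {g : ℝ → ℝ} (hg : IntegrableOn g (Ioi 0)) :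
    Tendsto (fun b => ∫ x in Ioi 0, Real.exp (b * x) * g x) atBot (𝓝 0) := by
  have := tendsto_integral_filter_of_dominated_convergence (l := atBot) (f := fun _ => 0)
    (F := fun b x => Real.exp (b * x) * g x) (fun x => ‖g x‖)
    (Eventually.of_forall fun b => (by fun_prop : Continuous fun x : ℝ => Real.exp (b * x))
      |>.aestronglyMeasurable.mul hg.aestronglyMeasurable) ?_ hg.norm ?_
  · simpa using this
  · filter_upwards [eventually_le_atBot 0] with b hb
    filter_upwards [ae_restrict_mem measurableSet_Ioi] with x hx
    rw [norm_mul, Real.norm_of_nonneg (Real.exp_pos _).le]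
    exact mul_le_of_le_one_left (norm_nonneg _)
      (Real.exp_le_one_iff.2 (mul_nonpos_of_nonpos_of_nonneg hb hx.le))
  · filter_upwards [ae_restrict_mem measurableSet_Ioi] with x hx
    simpa using (Real.tendsto_exp_atBot.comp (tendsto_id.atBot_mul_const hx)).mul_const (g x)

lemma tendsto_integral_one_sub_exp_mul_mul {g : ℝ → ℝ} (hg : IntegrableOn g (Ioi 0)) (b₀ : ℝ) :
    Tendsto (fun b => ∫ x in Ioi 0, (1 - Real.exp (-|b - b₀| * x)) * g x) (𝓝 b₀) (𝓝 0) := by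
  have := tendsto_integral_filter_of_dominated_convergence (l := 𝓝 b₀) (f := fun _ => 0)
    (F := fun b x => (1 - Real.exp (-|b - b₀| * x)) * g x) (fun x => ‖g x‖)
    (Eventually.of_forall fun b =>
      (by fun_prop : Continuous fun x : ℝ => 1 - Real.exp (-|b - b₀| * x))
        |>.aestronglyMeasurable.mul hg.aestronglyMeasurable) ?_ hg.norm ?_
  · simpa using this
  · filter_upwards with b
    filter_upwards [ae_restrict_mem measurableSet_Ioi] with x hx
    rw [norm_mul]
    exact mul_le_of_le_one_left (norm_nonneg _)
      (abs_one_sub_exp_neg_mul_le_one (abs_nonneg _) hx.le)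
  · filter_upwards with x
    simpa using
      ((by fun_prop : Continuous fun b => (1 - Real.exp (-|b - b₀| * x)) * g x).tendsto b₀)

end RealAnalysis

section Contour

variable {E : Type*} [NormedAddCommGroup E] [NormedSpace ℂ E]

lemma integral_eq_of_rect_upperHalfPlane {f : ℂ → E} (hc : ContinuousOn f {z | 0 ≤ z.im})
    (hd : DifferentiableOn ℂ f {z | 0 < z.im}) (R : ℝ) {H : ℝ} (hH : 0 ≤ H) :
    ∫ x in -R..R, f x = (∫ x in -R..R, f (x + H * I)) + I • (∫ y in 0..H, f (-R + y * I)) -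
      I • ∫ y in 0..H, f (R + y * I) := by
  have := integral_boundary_rect_eq_zero_of_continuousOn_of_differentiableOn f (-R) (R + H * I)
    (hc.mono ?_) (hd.mono ?_)
  · simp only [neg_re, ofReal_re, add_re, mul_re, I_re, I_im, ofReal_im, neg_im, add_im, mul_im,
      mul_zero, mul_one, sub_zero, zero_add, add_zero, neg_zero, ofReal_zero, zero_mul,
      ofReal_neg] at this
    rw [← sub_eq_zero, ← this]
    abel
  all_goals exact fun z hz => by simpa [hH] using (mem_reProdIm.1 hz).2.1

lemma norm_cexp_I_mul_mul_ofReal (z : ℂ) (τ : ℝ) :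
    ‖cexp (I * z * τ)‖ = Real.exp (-τ * z.im) := by
  simp [Complex.norm_exp, mul_comm]

lemma norm_intervalIntegral_le_div_of_le_exp {g : ℝ → E} {τ δ H : ℝ} (hτ : 0 < τ) (hH : 0 ≤ H)
    (hδ : 0 ≤ δ) (hg : ∀ y ∈ Ioc 0 H, ‖g y‖ ≤ Real.exp (-τ * y) * δ) :
    ‖∫ y in 0..H, g y‖ ≤ δ / τ := by
  have hexp : IntegrableOn (fun y => Real.exp (-τ * y)) (Ioi 0) :=
    integrableOn_exp_mul_Ioi (neg_neg_of_pos hτ) 0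
  calc ‖∫ y in 0..H, g y‖ ≤ ∫ y in 0..H, Real.exp (-τ * y) * δ :=
        intervalIntegral.norm_integral_le_of_norm_le hH (ae_of_all _ hg)
          ((by fun_prop : Continuous fun y => Real.exp (-τ * y) * δ).intervalIntegrable _ _)
    _ ≤ (∫ y in Ioi 0, Real.exp (-τ * y)) * δ := by
        rw [intervalIntegral.integral_mul_const, intervalIntegral.integral_of_le hH]
        exact mul_le_mul_of_nonneg_right (setIntegral_mono_set hexp
          (ae_of_all _ fun _ => (Real.exp_pos _).le) Ioc_subset_Ioi_self.eventuallyLE) hδ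
    _ = δ / τ := by
        rw [integral_exp_mul_Ioi (neg_neg_of_pos hτ)]
        field_simp
        simp

lemma norm_intervalIntegral_le_of_norm_le_exp {F : ℂ → E} {τ δ r : ℝ} (hτ : 0 < τ) (hδ : 0 ≤ δ)
    (hc : ContinuousOn F {z | 0 ≤ z.im}) (hd : DifferentiableOn ℂ F {z | 0 < z.im})
    (hF : ∀ z : ℂ, 0 ≤ z.im → r ≤ ‖z‖ → ‖F z‖ ≤ Real.exp (-τ * z.im) * δ) {R : ℝ} (hR : r ≤ R) :
    ‖∫ x in -R..R, F x‖ ≤ (1 + 2 / τ) * δ := by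
  have hdecay : Tendsto (fun H => |R - -R| * Real.exp (-τ * H)) atTop (𝓝 0) := by
    simpa using (Real.tendsto_exp_atBot.comp
      (tendsto_id.const_mul_atTop_of_neg (neg_neg_of_pos hτ))).const_mul |R - -R|
  obtain ⟨H, hH, hHr, hH0⟩ := ((hdecay.eventually (eventually_le_nhds one_pos)).and
    ((eventually_ge_atTop r).and (eventually_ge_atTop 0))).exists
  have htop : ‖∫ x in -R..R, F (x + H * I)‖ ≤ δ := by
    refine (intervalIntegral.norm_integral_le_of_norm_le_const (C := Real.exp (-τ * H) * δ)
      fun x _ => ?_).trans (by nlinarith)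
    have hHx := abs_im_le_norm ((x : ℂ) + H * I)
    simpa using hF ((x : ℂ) + H * I) (by simpa using hH0)
      (by simp at hHx; linarith [le_abs_self H])
  have hside : ∀ c : ℝ, R ≤ |c| → ‖∫ y in 0..H, F (c + y * I)‖ ≤ δ / τ := fun c hc =>
    norm_intervalIntegral_le_div_of_le_exp hτ hH0 hδ fun y hy => by
      have hcy := abs_re_le_norm ((c : ℂ) + y * I)
      simpa using hF ((c : ℂ) + y * I) (by simpa using hy.1.le) (by simp at hcy; linarith)
  have hleft : ‖∫ y in 0..H, F (-R + y * I)‖ ≤ δ / τ := by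
    exact_mod_cast hside (-R) (by simp [le_abs_self])
  have hright := hside R (le_abs_self R)
  rw [integral_eq_of_rect_upperHalfPlane hc hd R hH0]
  calc ‖(∫ x in -R..R, F (x + H * I)) + I • (∫ y in 0..H, F (-R + y * I)) -
        I • ∫ y in 0..H, F (R + y * I)‖
      ≤ ‖∫ x in -R..R, F (x + H * I)‖ + ‖∫ y in 0..H, F (-R + y * I)‖ +
        ‖∫ y in 0..H, F (R + y * I)‖ := by
        refine (norm_sub_le _ _).trans ?_
        rw [norm_smul, norm_I, one_mul]
        gcongr
        exact (norm_add_le _ _).trans_eq (by rw [norm_smul, norm_I, one_mul])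
    _ ≤ δ + δ / τ + δ / τ := by linarith
    _ = (1 + 2 / τ) * δ := by ring

theorem integral_cexp_I_mul_smul_eq_zero {f : ℂ → E} {τ : ℝ} (hτ : 0 < τ)
    (hc : ContinuousOn f {z | 0 ≤ z.im}) (hd : DifferentiableOn ℂ f {z | 0 < z.im})
    (hf : Tendsto f (cobounded ℂ ⊓ 𝓟 {z | 0 ≤ z.im}) (𝓝 0)) :
    ∫ x : ℝ, cexp (I * x * τ) • f x = 0 := by
  set F : ℂ → E := fun z => cexp (I * z * τ) • f z
  by_cases hint : Integrable fun x : ℝ => F x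
  swap
  · exact integral_undef hint
  refine tendsto_nhds_unique
    (intervalIntegral_tendsto_integral hint tendsto_neg_atTop_atBot tendsto_id) ?_
  rw [NormedAddGroup.tendsto_nhds_zero]
  intro ε hε
  have hδ : 0 < ε / (2 + 2 / τ) := by positivity
  obtain ⟨r, -, hr⟩ := (hasBasis_cobounded_norm.inf_principal _).eventually_iff.1
    (hf.eventually (Metric.closedBall_mem_nhds 0 hδ))
  have hF : ∀ z : ℂ, 0 ≤ z.im → r ≤ ‖z‖ → ‖F z‖ ≤ Real.exp (-τ * z.im) * (ε / (2 + 2 / τ)) :=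
    fun z him hz => by
      rw [norm_smul, norm_cexp_I_mul_mul_ofReal]
      gcongr
      simpa using hr ⟨hz, him⟩
  filter_upwards [eventually_ge_atTop r] with R hR
  refine (norm_intervalIntegral_le_of_norm_le_exp hτ hδ.le
    ((by fun_prop : Continuous fun z : ℂ => cexp (I * z * τ)).continuousOn.smul hc)
    ((by fun_prop : Differentiable ℂ fun z : ℂ => cexp (I * z * τ)).differentiableOn.smul hd)
    hF hR).trans_lt ?_
  rw [← mul_div_assoc, div_lt_iff₀ (by positivity)]
  nlinarith

end Contour

section HalfLineFourier

variable {E : Type*} [NormedAddCommGroup E] [NormedSpace ℂ E]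

noncomputable def halfLineFourier (φ : ℝ → E) (l : ℂ) : E :=
  ∫ x in Ioi (0 : ℝ), cexp (-(I * l * x)) • φ x

lemma norm_cexp_neg_I_mul_mul_ofReal (l : ℂ) (x : ℝ) :
    ‖cexp (-(I * l * x))‖ = Real.exp (l.im * x) := by
  simp [Complex.norm_exp, Complex.mul_re]

lemma norm_cexp_neg_I_mul_mul_ofReal_le_one {l : ℂ} (hl : l.im ≤ 0) {x : ℝ} (hx : 0 ≤ x) :
    ‖cexp (-(I * l * x))‖ ≤ 1 := by
  rw [norm_cexp_neg_I_mul_mul_ofReal, Real.exp_le_one_iff]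
  exact mul_nonpos_of_nonpos_of_nonneg hl hx

variable {φ : ℝ → E}

lemma integrableOn_cexp_smul (hφ : IntegrableOn φ (Ioi 0)) {l : ℂ} (hl : l.im ≤ 0) :
    IntegrableOn (fun x : ℝ => cexp (-(I * l * x)) • φ x) (Ioi 0) := by
  refine hφ.norm.mono' ((by fun_prop : Continuous fun x : ℝ => cexp (-(I * l * x)))
    |>.aestronglyMeasurable.smul hφ.aestronglyMeasurable) ?_
  filter_upwards [ae_restrict_mem measurableSet_Ioi] with x hx
  rw [norm_smul]
  exact mul_le_of_le_one_left (norm_nonneg _) (norm_cexp_neg_I_mul_mul_ofReal_le_one hl hx.le)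

lemma norm_halfLineFourier_le (φ : ℝ → E) (l : ℂ) :
    ‖halfLineFourier φ l‖ ≤ ∫ x in Ioi 0, Real.exp (l.im * x) * ‖φ x‖ :=
  (norm_integral_le_integral_norm _).trans_eq <| by
    simp_rw [norm_smul, norm_cexp_neg_I_mul_mul_ofReal]

lemma continuousOn_halfLineFourier (hφ : IntegrableOn φ (Ioi 0)) :
    ContinuousOn (halfLineFourier φ) {l | l.im ≤ 0} := by
  refine continuousOn_of_dominated (fun l hl => (integrableOn_cexp_smul hφ hl).1)
    (fun l hl => ?_) hφ.norm (ae_of_all _ fun x => by fun_prop)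
  filter_upwards [ae_restrict_mem measurableSet_Ioi] with x hx
  rw [norm_smul]
  exact mul_le_of_le_one_left (norm_nonneg _) (norm_cexp_neg_I_mul_mul_ofReal_le_one hl hx.le)

lemma differentiableOn_halfLineFourier [CompleteSpace E] (hφ : IntegrableOn φ (Ioi 0)) :
    DifferentiableOn ℂ (halfLineFourier φ) {l | l.im < 0} := by
  rintro l (hl : l.im < 0)
  refine DifferentiableAt.differentiableWithinAt ?_
  have hc : 0 < -l.im / 2 := by linarith
  have hderiv : ∀ (x : ℝ) (m : ℂ), HasDerivAt (fun m : ℂ => cexp (-(I * m * x)) • φ x)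
      ((-(I * x) * cexp (-(I * m * x))) • φ x) m := fun x m => by
    refine HasDerivAt.smul_const ?_ (φ x)
    have h := (((hasDerivAt_id' m).const_mul I).mul_const (x : ℂ)).neg.cexp
    rwa [mul_one, mul_comm] at h
  refine (hasDerivAt_integral_of_dominated_loc_of_deriv_le (s := {m | m.im < l.im / 2})
    (bound := fun x => (-l.im / 2)⁻¹ * ‖φ x‖)
    ((isOpen_lt continuous_im continuous_const).mem_nhds (by simp only [mem_ofPred_eq]; linarith))
    (Eventually.of_forall fun m => (by fun_prop : Continuous fun x : ℝ => cexp (-(I * m * x)))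
      |>.aestronglyMeasurable.smul hφ.aestronglyMeasurable)
    (integrableOn_cexp_smul hφ hl.le)
    ((by fun_prop : Continuous fun x : ℝ => -(I * x) * cexp (-(I * l * x)))
      |>.aestronglyMeasurable.smul hφ.aestronglyMeasurable) ?_ (hφ.norm.const_mul _)
    (ae_of_all _ fun x m _ => hderiv x m)).2.differentiableAt
  filter_upwards [ae_restrict_mem measurableSet_Ioi] with x hx m hm
  rw [norm_smul, norm_mul, norm_cexp_neg_I_mul_mul_ofReal]
  have : ‖-(I * (x : ℂ))‖ = x := by simp [abs_of_pos (mem_Ioi.1 hx)]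
  rw [this]
  gcongr
  exact mul_exp_mul_le_inv hc (by linarith) hx.le

lemma tendsto_halfLineFourier_add_mul_I_cocompact (φ : ℝ → E) (b : ℝ) :
    Tendsto (fun a : ℝ => halfLineFourier φ (a + b * I)) (cocompact ℝ) (𝓝 0) := by
  set g := (Ioi 0).indicator (fun x : ℝ => cexp (b * x) • φ x)
  have key : ∀ a : ℝ, halfLineFourier φ (a + b * I) = 𝓕 g (a * (2 * π)⁻¹) := by
    intro a
    rw [Real.fourier_real_eq_integral_exp_smul, halfLineFourier,
      ← integral_indicator measurableSet_Ioi]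
    congr 1 with x
    by_cases hx : x ∈ Ioi 0
    · simp only [g, indicator_of_mem hx, smul_smul, ← Complex.exp_add]
      congr 2
      push_cast
      field_simp
      linear_combination (-x * b : ℂ) * I_sq
    · simp [g, hx]
  simp_rw [key]
  exact (Real.zero_at_infty_fourier g).comp
    (Homeomorph.mulRight₀ (2 * π)⁻¹ (by positivity)).map_cocompact.le

lemma norm_cexp_sub_cexp_le (a x : ℝ) {b b' : ℝ} (hb : b ≤ 0) (hb' : b' ≤ 0) (hx : 0 ≤ x) :
    ‖cexp (-(I * (a + b * I) * x)) - cexp (-(I * (a + b' * I) * x))‖ ≤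
      1 - Real.exp (-|b - b'| * x) := by
  have hsplit : ∀ c : ℝ, cexp (-(I * (a + c * I) * x)) = cexp (-(I * a * x)) * Real.exp (c * x) :=
    fun c => by
      rw [ofReal_exp, ← Complex.exp_add]
      congr 1
      push_cast
      linear_combination (-c * x : ℂ) * I_sq
  rw [hsplit, hsplit, ← mul_sub, norm_mul, norm_cexp_neg_I_mul_mul_ofReal, ofReal_im, zero_mul,
    Real.exp_zero, one_mul, ← ofReal_sub, norm_real, Real.norm_eq_abs]
  convert abs_exp_sub_exp_le (mul_nonpos_of_nonpos_of_nonneg hb hx)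
    (mul_nonpos_of_nonpos_of_nonneg hb' hx) using 4
  rw [← sub_mul, abs_mul, abs_of_nonneg hx, neg_mul]

lemma norm_halfLineFourier_sub_le (hφ : IntegrableOn φ (Ioi 0)) (a : ℝ) {b b' : ℝ}
    (hb : b ≤ 0) (hb' : b' ≤ 0) :
    ‖halfLineFourier φ (a + b * I) - halfLineFourier φ (a + b' * I)‖ ≤
      ∫ x in Ioi 0, (1 - Real.exp (-|b - b'| * x)) * ‖φ x‖ := by
  rw [halfLineFourier, halfLineFourier, ← integral_sub (integrableOn_cexp_smul hφ (by simpa))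
    (integrableOn_cexp_smul hφ (by simpa))]
  refine norm_integral_le_of_norm_le (hφ.norm.bdd_mul (c := 1) (by fun_prop) ?_) ?_
  all_goals filter_upwards [ae_restrict_mem measurableSet_Ioi] with x hx
  · exact abs_one_sub_exp_neg_mul_le_one (abs_nonneg _) hx.le
  · rw [← sub_smul, norm_smul]
    gcongr
    exact norm_cexp_sub_cexp_le a x hb hb' hx.le

lemma eventually_forall_Icc_norm_halfLineFourier_lt (hφ : IntegrableOn φ (Ioi 0)) {ε : ℝ}
    (hε : 0 < ε) (B : ℝ) :
    ∀ᶠ a : ℝ in cocompact ℝ, ∀ b ∈ Icc B 0, ‖halfLineFourier φ (a + b * I)‖ < ε := by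
  have hlocal : ∀ b₀ ∈ Icc B 0, ∀ᶠ p in cocompact ℝ ×ˢ 𝓝 b₀,
      p.2 ≤ 0 → ‖halfLineFourier φ (p.1 + p.2 * I)‖ < ε := by
    intro b₀ hb₀
    have hre := (tendsto_halfLineFourier_add_mul_I_cocompact φ b₀).eventually
      (Metric.ball_mem_nhds 0 (half_pos hε))
    have him := (tendsto_integral_one_sub_exp_mul_mul hφ.norm b₀).eventually
      (gt_mem_nhds (half_pos hε))
    filter_upwards [hre.prod_mk him] with ⟨a, b⟩ ⟨ha, hb⟩ hb0
    rw [dist_zero_right] at ha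
    calc ‖halfLineFourier φ (a + b * I)‖
        ≤ ‖halfLineFourier φ (a + b * I) - halfLineFourier φ (a + b₀ * I)‖ +
          ‖halfLineFourier φ (a + b₀ * I)‖ := norm_le_norm_sub_add _ _
      _ < ε / 2 + ε / 2 := add_lt_add_of_le_of_lt
          ((norm_halfLineFourier_sub_le hφ a hb0 hb₀.2).trans hb.le) ha
      _ = ε := add_halves ε
  filter_upwards [Eventually.curry (isCompact_Icc.mem_prod_nhdsSet_of_forall hlocal)] with a ha b hb
  exact ha.self_of_nhdsSet b hb hb.2

theorem tendsto_halfLineFourier_cobounded (hφ : IntegrableOn φ (Ioi 0)) :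
    Tendsto (halfLineFourier φ) (cobounded ℂ ⊓ 𝓟 {l | l.im ≤ 0}) (𝓝 0) := by
  rw [Metric.tendsto_nhds]
  intro ε hε
  obtain ⟨B, hB⟩ := eventually_atBot.1
    ((tendsto_integral_exp_mul_mul_atBot hφ.norm).eventually (gt_mem_nhds hε))
  obtain ⟨A, -, hA⟩ :=
    (Metric.cobounded_eq_cocompact (α := ℝ) ▸ hasBasis_cobounded_norm).eventually_iff.1
      (eventually_forall_Icc_norm_halfLineFourier_lt hφ hε (min B 0))
  rw [(hasBasis_cobounded_norm.inf_principal _).eventually_iff]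
  refine ⟨A + |min B 0|, trivial, fun l ⟨hl, him⟩ => ?_⟩
  rw [dist_zero_right]
  rcases lt_or_ge l.im (min B 0) with h | h
  · exact (norm_halfLineFourier_le φ l).trans_lt (hB _ (h.le.trans (min_le_left _ _)))
  · have hre : A ≤ ‖l.re‖ := by
      have hl : A + |min B 0| ≤ ‖l‖ := hl
      have := norm_le_abs_re_add_abs_im l
      have := abs_le_abs_of_nonpos him h
      rw [Real.norm_eq_abs]
      linarith
    simpa [re_add_im] using hA hre l.im ⟨h, him⟩

end HalfLineFourier

noncomputable def rotatedRoot (n : ℕ) (θ : ℝ) (ρ : ℂ) : ℂ :=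
  cexp (I * θ) * (-(I * ρ)) ^ ((n : ℂ)⁻¹)

section RotatedRoot

variable {n : ℕ} {θ : ℝ}

lemma norm_rotatedRoot (ρ : ℂ) :
    ‖rotatedRoot n θ ρ‖ = ‖ρ‖ ^ ((n : ℝ)⁻¹) := by
  rw [rotatedRoot, norm_mul, norm_exp_I_mul_ofReal, one_mul, ← ofReal_natCast, ← ofReal_inv,
    norm_cpow_real, norm_neg, norm_mul, norm_I, one_mul]

lemma im_rotatedRoot {ρ : ℂ} (hρ : ρ ≠ 0) :
    (rotatedRoot n θ ρ).im =
      Real.exp (Real.log ‖ρ‖ / n) * Real.sin (θ + arg (-(I * ρ)) / n) := by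
  rw [rotatedRoot, cpow_def_of_ne_zero (by simpa using hρ), ← Complex.exp_add, exp_im,
    ← ofReal_natCast, ← ofReal_inv]
  simp [log_re, log_im, div_eq_mul_inv, -ofReal_inv]

lemma add_div_mem_Icc (hn : n ≠ 0)
    (hθ : θ ∈ Icc (-(2 * (n : ℝ) - 1) * π / (2 * n)) (-π / (2 * n))) {α : ℝ}
    (hα : |α| ≤ π / 2) : θ + α / n ∈ Icc (-π) 0 := by
  have hn' : (0 : ℝ) < n := by positivity
  have hαn : |α / n| ≤ π / (2 * n) := by
    rw [abs_div, Nat.abs_cast, div_le_div_iff₀ hn' (by positivity)]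
    nlinarith
  have : -(2 * (n : ℝ) - 1) * π / (2 * n) = -π + π / (2 * n) := by field_simp; ring
  rw [abs_le] at hαn
  constructor <;> linarith [hθ.1, hθ.2, neg_div (2 * (n : ℝ)) π]

lemma add_div_mem_Ioo (hn : n ≠ 0)
    (hθ : θ ∈ Icc (-(2 * (n : ℝ) - 1) * π / (2 * n)) (-π / (2 * n))) {α : ℝ}
    (hα : |α| < π / 2) : θ + α / n ∈ Ioo (-π) 0 := by
  have hn' : (0 : ℝ) < n := by positivity
  have hαn : |α / n| < π / (2 * n) := by
    rw [abs_div, Nat.abs_cast, div_lt_div_iff₀ hn' (by positivity)]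
    nlinarith
  have : -(2 * (n : ℝ) - 1) * π / (2 * n) = -π + π / (2 * n) := by field_simp; ring
  rw [abs_lt] at hαn
  constructor <;> linarith [hθ.1, hθ.2, neg_div (2 * (n : ℝ)) π]

lemma im_rotatedRoot_nonpos (hn : n ≠ 0)
    (hθ : θ ∈ Icc (-(2 * (n : ℝ) - 1) * π / (2 * n)) (-π / (2 * n))) {ρ : ℂ} (hρ : 0 ≤ ρ.im) :
    (rotatedRoot n θ ρ).im ≤ 0 := by
  rcases eq_or_ne ρ 0 with rfl | hρ₀
  · simp [rotatedRoot, zero_cpow (inv_ne_zero (Nat.cast_ne_zero.2 hn))]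
  rw [im_rotatedRoot hρ₀]
  have hα := add_div_mem_Icc hn hθ
    ((abs_arg_le_pi_div_two_iff (z := -(I * ρ))).2 (by simpa using hρ))
  exact mul_nonpos_of_nonneg_of_nonpos (Real.exp_pos _).le
    (Real.sin_nonpos_of_nonpos_of_neg_pi_le hα.2 hα.1)

lemma im_rotatedRoot_neg (hn : n ≠ 0)
    (hθ : θ ∈ Icc (-(2 * (n : ℝ) - 1) * π / (2 * n)) (-π / (2 * n))) {ρ : ℂ} (hρ : 0 < ρ.im) :
    (rotatedRoot n θ ρ).im < 0 := by
  have hρ₀ : ρ ≠ 0 := by rintro rfl; simp at hρ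
  rw [im_rotatedRoot hρ₀]
  have hα := add_div_mem_Ioo hn hθ
    ((abs_arg_lt_pi_div_two_iff (z := -(I * ρ))).2 (Or.inl (by simpa using hρ)))
  exact mul_neg_of_pos_of_neg (Real.exp_pos _) (Real.sin_neg_of_neg_of_neg_pi_lt hα.2 hα.1)

lemma continuousOn_rotatedRoot (hn : n ≠ 0) :
    ContinuousOn (rotatedRoot n θ) {ρ | 0 ≤ ρ.im} := fun ρ hρ =>
  (continuousAt_const.mul ((continuousAt_cpow_const_of_re_pos (Or.inl (by simpa using hρ))
    (by simpa using Nat.pos_of_ne_zero hn)).comp (by fun_prop))).continuousWithinAt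

lemma differentiableOn_rotatedRoot : DifferentiableOn ℂ (rotatedRoot n θ) {ρ | 0 < ρ.im} :=
  fun ρ hρ => ((differentiableAt_id.const_mul I).neg.cpow_const
    (Or.inl (by simpa using hρ))).const_mul _ |>.differentiableWithinAt

lemma tendsto_rotatedRoot (hn : n ≠ 0)
    (hθ : θ ∈ Icc (-(2 * (n : ℝ) - 1) * π / (2 * n)) (-π / (2 * n))) :
    Tendsto (rotatedRoot n θ) (cobounded ℂ ⊓ 𝓟 {ρ | 0 ≤ ρ.im})
      (cobounded ℂ ⊓ 𝓟 {l | l.im ≤ 0}) := by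
  refine tendsto_inf.2 ⟨tendsto_norm_atTop_iff_cobounded.1 ?_,
    tendsto_principal.2 (eventually_inf_principal.2 (Eventually.of_forall
      fun ρ hρ => im_rotatedRoot_nonpos hn hθ hρ))⟩
  simp_rw [norm_rotatedRoot]
  exact (tendsto_rpow_atTop (by positivity)).comp
    (tendsto_norm_cobounded_atTop.mono_left inf_le_left)

end RotatedRoot

theorem stmt14_general (n : ℕ) (hn : 2 ≤ n) (T t : ℝ) (hTt : t < T)
    (θ : ℝ) (hθ : θ ∈ Set.Icc (-(2 * (n : ℝ) - 1) * Real.pi / (2 * n)) (-Real.pi / (2 * n)))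
    (φ : ℝ → ℂ) (hφ : IntegrableOn φ (Set.Ici 0)) :
    (∫ ρ : ℝ, Complex.exp (I * ρ * (T - t)) *
      ∫ x in Set.Ioi (0 : ℝ),
        Complex.exp (-(I * (Complex.exp (I * θ) * (-(I * ρ)) ^ (((n : ℂ))⁻¹)) * x)) * φ x) = 0 := by
  have hn₀ : n ≠ 0 := by omega
  have hφ₀ : IntegrableOn φ (Ioi 0) := hφ.mono_set Ioi_subset_Ici_self
  have key := integral_cexp_I_mul_smul_eq_zero (sub_pos.2 hTt)
    ((continuousOn_halfLineFourier hφ₀).comp (continuousOn_rotatedRoot hn₀)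
      fun _ hρ => im_rotatedRoot_nonpos hn₀ hθ hρ)
    ((differentiableOn_halfLineFourier hφ₀).comp differentiableOn_rotatedRoot
      fun _ hρ => im_rotatedRoot_neg hn₀ hθ hρ)
    ((tendsto_halfLineFourier_cobounded hφ₀).comp (tendsto_rotatedRoot hn₀ hθ))
  simpa [halfLineFourier, rotatedRoot] using key

theorem stmt14 (n : ℕ) (hn : 2 ≤ n) (T t : ℝ) (ht : 0 ≤ t) (hTt : t < T)
    (θ : ℝ) (hθ : θ ∈ Set.Icc (-(2 * (n : ℝ) - 1) * Real.pi / (2 * n)) (-Real.pi / (2 * n)))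
    (φ : ℝ → ℂ) (hφ : IntegrableOn φ (Set.Ici 0))
    (hφ' : IntegrableOn (deriv φ) (Set.Ici 0)) :
    (∫ ρ : ℝ, Complex.exp (I * ρ * (T - t)) *
      ∫ x in Set.Ioi (0 : ℝ),
        Complex.exp (-(I * (Complex.exp (I * θ) * (-(I * ρ)) ^ (((n : ℂ))⁻¹)) * x)) * φ x) = 0 :=
  stmt14_general n hn T t hTt θ hθ φ hφ
end

section
/- Let α = 1/2, and let b and g be given by convergent series b(t) = Σ_{u≥0} B_u t^{u/2}, g(t) = Σ_{u≥0} G_u t^{u/2} on [0,T]. Define Y₀ arbitrarily and Y_{u+1} = (Γ((u+2)/2)/Γ((u+3)/2)) ( G_u + Σ_{v=0}^u Y_v B_{u-v} ) for u ≥ 0. If y(t) = Σ_{u≥0} Y_u t^{u/2} converges on [0,T] along with its formal Caputo half-derivative series, then y satisfies D^{1/2}y(t) − b(t)y(t) = g(t) with D^{1/2} the Caputo half-derivative, on (0,T]. -/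
open Complex MeasureTheory Set

/-- Caputo fractional derivative of order `α` (left-sided, based at `0`) of a
complex-valued function. -/
noncomputable def caputoC (α : ℝ) (y : ℝ → ℂ) (x : ℝ) : ℂ :=
  (1 / (Real.Gamma (1 - α) : ℂ)) * ∫ t in (0 : ℝ)..x, deriv y t * ((((x - t) ^ (-α) : ℝ)) : ℂ)

/-!
Writing the half-power series as power series in `√t`, the Cauchy product turns `b * y` into the
series with coefficients `∑_{v ≤ u} Y_v B_{u-v}`, and the recurrence says that these, plus `G_u`,
are the coefficients of the formal half-derivative of `y`. So it remains to show that the Caputo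
derivative of `y` is its formal half-derivative. Inside `(0, T)` the series of `y` can be
differentiated termwise, the derivatives being dominated by `u q^u` with `q < 1`. The resulting
series can then be integrated termwise against `(t - s)^(-1/2)`: each term is a constant times the
nonnegative kernel `p s^(p-1) (t - s)^(-1/2)`, whose Beta integral is
`Γ(p+1) Γ(1/2) / Γ(p+1/2) t^(p-1/2)`, so the integrated norms are summable exactly when the
formal half-derivative series converges absolutely, which in `ℂ` is just convergence.
-/

theorem integral_rpow_mul_sub_rpow {p q t : ℝ} (hp : 0 < p) (hq : 0 < q) (ht : 0 < t) :
    ∫ s in 0..t, s ^ (p - 1) * (t - s) ^ (q - 1)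
      = Real.Gamma p * Real.Gamma q / Real.Gamma (p + q) * t ^ (p + q - 1) := by
  have hbeta : betaIntegral p q = Gamma p * Gamma q / Gamma (p + q) := by
    rw [Gamma_mul_Gamma_eq_betaIntegral (by simpa using hp) (by simpa using hq),
      mul_div_cancel_left₀ _ (Gamma_ne_zero_of_re_pos (by simp; positivity))]
  apply ofReal_injective
  rw [← intervalIntegral.integral_ofReal]
  calc ∫ s in 0..t, ((s ^ (p - 1) * (t - s) ^ (q - 1) : ℝ) : ℂ)
      = ∫ s in 0..t, (s : ℂ) ^ ((p : ℂ) - 1) * ((t : ℂ) - s) ^ ((q : ℂ) - 1) := by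
        refine intervalIntegral.integral_congr fun s hs => ?_
        rw [uIcc_of_le ht.le] at hs
        simp only [ofReal_mul, ofReal_cpow hs.1, ofReal_cpow (sub_nonneg.2 hs.2), ofReal_sub,
          ofReal_one]
    _ = _ := by
        rw [betaIntegral_scaled _ _ ht, hbeta, ofReal_mul, ofReal_cpow ht.le, ofReal_div,
          ofReal_mul, ← Gamma_ofReal, ← Gamma_ofReal, ← Gamma_ofReal]
        push_cast
        ring

theorem integral_Ioo_mul_rpow_mul_sub_rpow {p α t : ℝ} (hp : 0 < p) (hα : α < 1) (ht : 0 < t) :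
    ∫ s in Ioo 0 t, p * s ^ (p - 1) * (t - s) ^ (-α)
      = Real.Gamma (p + 1) * Real.Gamma (1 - α) / Real.Gamma (p + 1 - α) * t ^ (p - α) := by
  rw [← integral_Ioc_eq_integral_Ioo, ← intervalIntegral.integral_of_le ht.le]
  simp only [mul_assoc, intervalIntegral.integral_const_mul]
  have hbeta := integral_rpow_mul_sub_rpow hp (sub_pos.2 hα) ht
  rw [sub_sub_cancel_left] at hbeta
  rw [hbeta, Real.Gamma_add_one hp.ne']
  ring_nf

theorem integrableOn_Ioo_mul_rpow_mul_sub_rpow {p α t : ℝ} (hp : 0 < p) (hα : α < 1)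
    (ht : 0 < t) : IntegrableOn (fun s => p * s ^ (p - 1) * (t - s) ^ (-α)) (Ioo 0 t) := by
  refine Integrable.of_integral_ne_zero ?_
  rw [integral_Ioo_mul_rpow_mul_sub_rpow hp hα ht]
  have := Real.Gamma_pos_of_pos (show 0 < p + 1 - α by linarith)
  have := Real.Gamma_pos_of_pos (show 0 < p + 1 by linarith)
  have := Real.Gamma_pos_of_pos (show 0 < 1 - α by linarith)
  positivity

theorem integral_Ioo_const_mul_caputo_half_term {t : ℝ} (ht : 0 < t) (c : ℂ) (v : ℕ) :
    ∫ s in Ioo 0 t, c * ((((v + 1 : ℕ) : ℝ) / 2 * s ^ (((v + 1 : ℕ) : ℝ) / 2 - 1)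
      * (t - s) ^ (-(1 / 2 : ℝ)) : ℝ) : ℂ)
      = Real.Gamma (1 - 1 / 2) * (c * ((Real.Gamma (((v : ℝ) + 1) / 2 + 1)
        / Real.Gamma ((v : ℝ) / 2 + 1) : ℝ) : ℂ) * ((t ^ ((v : ℝ) / 2) : ℝ) : ℂ)) := by
  have e1 : ((v + 1 : ℕ) : ℝ) / 2 + 1 = ((v : ℝ) + 1) / 2 + 1 := by push_cast; ring
  have e2 : ((v + 1 : ℕ) : ℝ) / 2 + 1 - 1 / 2 = (v : ℝ) / 2 + 1 := by push_cast; ring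
  have e3 : ((v + 1 : ℕ) : ℝ) / 2 - 1 / 2 = (v : ℝ) / 2 := by push_cast; ring
  rw [integral_const_mul, integral_complex_ofReal,
    integral_Ioo_mul_rpow_mul_sub_rpow (by positivity) (by norm_num) ht, e2, e1, e3]
  push_cast
  ring

theorem integral_norm_mul_ofReal {X : Type*} [MeasurableSpace X] {μ : Measure X} {f : X → ℝ}
    (hf : 0 ≤ᵐ[μ] f) (c : ℂ) : ∫ x, ‖c * f x‖ ∂μ = ‖∫ x, c * f x ∂μ‖ := by
  simp only [norm_mul, norm_real, Real.norm_eq_abs]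
  rw [integral_const_mul, integral_const_mul, integral_complex_ofReal, norm_mul, norm_real,
    Real.norm_of_nonneg (integral_nonneg_of_ae hf),
    integral_congr_ae (hf.mono fun x hx => abs_of_nonneg hx)]

noncomputable def halfPowSeries (a : ℕ → ℂ) (t : ℝ) (u : ℕ) : ℂ :=
  a u * ((t ^ ((u : ℝ) / 2) : ℝ) : ℂ)

theorem Real.rpow_natCast_div_two_eq_sqrt_pow {x : ℝ} (hx : 0 ≤ x) (u : ℕ) :
    x ^ ((u : ℝ) / 2) = √x ^ u := by
  rw [Real.sqrt_eq_rpow, ← Real.rpow_natCast, ← Real.rpow_mul hx]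
  ring_nf

theorem halfPowSeries_eq {a : ℕ → ℂ} {t : ℝ} (ht : 0 ≤ t) (u : ℕ) :
    halfPowSeries a t u = a u * (√t : ℂ) ^ u := by
  rw [halfPowSeries, Real.rpow_natCast_div_two_eq_sqrt_pow ht, ofReal_pow]

theorem norm_mul_deriv_rpow_half_le {c x r : ℝ} (a : ℂ) (u : ℕ) (hr : 0 < r) (hrx : r ≤ x)
    (hxc : x ≤ c) :
    ‖a * (((u : ℝ) / 2 * x ^ ((u : ℝ) / 2 - 1) : ℝ) : ℂ)‖ ≤ ‖a‖ * √c ^ u / r * u := by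
  have hx : 0 < x := hr.trans_le hrx
  rw [norm_mul, norm_real, Real.norm_of_nonneg (by positivity), Real.rpow_sub_one hx.ne',
    Real.rpow_natCast_div_two_eq_sqrt_pow hx.le]
  calc ‖a‖ * ((u : ℝ) / 2 * (√x ^ u / x)) ≤ ‖a‖ * ((u : ℝ) * (√c ^ u / r)) := by
        gcongr
        linarith [(u.cast_nonneg : (0 : ℝ) ≤ u)]
    _ = _ := by ring

theorem hasDerivAt_tsum_halfPowSeries {a : ℕ → ℂ} {T s : ℝ} (ha : Summable (halfPowSeries a T))
    (hs : s ∈ Ioo 0 T) :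
    HasDerivAt (fun x => ∑' u, halfPowSeries a x u)
      (∑' u, a u * (((u : ℝ) / 2 * s ^ ((u : ℝ) / 2 - 1) : ℝ) : ℂ)) s := by
  obtain ⟨hs0, hsT⟩ := hs
  obtain ⟨M, hM⟩ := ha.tendsto_atTop_zero.norm.bddAbove_range
  have hT : 0 < T := hs0.trans hsT
  obtain ⟨c, hsc, hcT⟩ := exists_between hsT
  set q := √c / √T
  have hq : ‖q‖ < 1 := by
    rw [Real.norm_of_nonneg (by positivity), div_lt_one (by positivity)]
    exact Real.sqrt_lt_sqrt (hs0.trans hsc).le hcT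
  have hbound : ∀ u x, x ∈ Ioo (s / 2) c →
      ‖a u * (((u : ℝ) / 2 * x ^ ((u : ℝ) / 2 - 1) : ℝ) : ℂ)‖ ≤ M / (s / 2) * (u * q ^ u) := by
    intro u x hx
    refine (norm_mul_deriv_rpow_half_le _ u (by positivity) hx.1.le hx.2.le).trans ?_
    have hcq : √c ^ u = √T ^ u * q ^ u := by
      rw [← mul_pow, mul_div_cancel₀ _ (Real.sqrt_pos.2 hT).ne']
    have hMu : ‖a u‖ * √T ^ u ≤ M := by
      simpa [halfPowSeries_eq hT.le, ← ofReal_pow, norm_real,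
        Real.norm_of_nonneg (pow_nonneg (Real.sqrt_nonneg T) u)] using hM (mem_range_self u)
    calc ‖a u‖ * √c ^ u / (s / 2) * u = ‖a u‖ * √T ^ u * q ^ u / (s / 2) * u := by
          rw [hcq, mul_assoc]
      _ ≤ M * q ^ u / (s / 2) * u := by gcongr
      _ = M / (s / 2) * (u * q ^ u) := by ring
  have hsummable : Summable (halfPowSeries a s) := by
    refine Summable.of_norm_bounded ha.norm fun u => ?_
    rw [halfPowSeries_eq hs0.le, halfPowSeries_eq hT.le, norm_mul, norm_mul, norm_pow, norm_pow,
      norm_real, norm_real, Real.norm_of_nonneg (Real.sqrt_nonneg _),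
      Real.norm_of_nonneg (Real.sqrt_nonneg _)]
    gcongr
  refine hasDerivAt_tsum_of_isPreconnected (g := fun u x => halfPowSeries a x u)
    ((summable_pow_mul_geometric_of_norm_lt_one 1 hq).mul_left (M / (s / 2)) |>.congr ?_)
    isOpen_Ioo isPreconnected_Ioo (fun u x hx => ?_) hbound ⟨by linarith, hsc⟩ hsummable
    ⟨by linarith, hsc⟩
  · simp
  · exact ((Real.hasDerivAt_rpow_const (Or.inl (by linarith [hx.1]))).ofReal_comp).const_mul (a u)

theorem deriv_eq_tsum_of_hasSum_halfPowSeries {T s : ℝ} {a : ℕ → ℂ} {y : ℝ → ℂ}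
    (hy : ∀ x ∈ Ioc 0 T, HasSum (halfPowSeries a x) (y x)) (hs : s ∈ Ioo 0 T) :
    deriv y s = ∑' u, a u * (((u : ℝ) / 2 * s ^ ((u : ℝ) / 2 - 1) : ℝ) : ℂ) := by
  have hy_eq : y =ᶠ[nhds s] fun x => ∑' u, halfPowSeries a x u :=
    Filter.eventually_of_mem (Ioo_mem_nhds hs.1 hs.2) fun x hx =>
      (hy x ⟨hx.1, hx.2.le⟩).tsum_eq.symm
  exact ((hasDerivAt_tsum_halfPowSeries (hy T ⟨hs.1.trans hs.2, le_rfl⟩).summable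
    hs).congr_of_eventuallyEq hy_eq).deriv

theorem HasSum.mul_halfPowSeries {a b : ℕ → ℂ} {A B : ℂ} {t : ℝ} (ht : 0 ≤ t)
    (ha : HasSum (halfPowSeries a t) A) (hb : HasSum (halfPowSeries b t) B) :
    HasSum (halfPowSeries (fun u => ∑ v ∈ Finset.range (u + 1), a v * b (u - v)) t) (A * B) := by
  have hcauchy := hasSum_sum_range_mul_of_summable_norm ha.summable.norm hb.summable.norm
  rw [ha.tsum_eq, hb.tsum_eq] at hcauchy
  refine hcauchy.congr_fun fun u => ?_
  simp only [halfPowSeries_eq ht, Finset.sum_mul]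
  refine Finset.sum_congr rfl fun v hv => ?_
  rw [← Nat.add_sub_of_le (Finset.mem_range_succ_iff.1 hv)]
  simp only [Nat.add_sub_cancel_left, pow_add]
  ring

/-- `D^(1/2) t^((u+1)/2) = Γ((u+1)/2 + 1) / Γ(u/2 + 1) t^(u/2)`. -/
noncomputable def halfDerivCoeff (a : ℕ → ℂ) (u : ℕ) : ℂ :=
  a (u + 1) * ((Real.Gamma (((u : ℝ) + 1) / 2 + 1) / Real.Gamma ((u : ℝ) / 2 + 1) : ℝ) : ℂ)

theorem hasSum_caputoC_half {T t : ℝ} {a : ℕ → ℂ} {y : ℝ → ℂ}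
    (hy : ∀ s ∈ Ioc 0 T, HasSum (halfPowSeries a s) (y s))
    (hD : Summable (halfPowSeries (halfDerivCoeff a) t)) (ht : t ∈ Ioc 0 T) :
    HasSum (halfPowSeries (halfDerivCoeff a) t) (caputoC (1 / 2) y t) := by
  obtain ⟨ht0, htT⟩ := ht
  set F : ℕ → ℝ → ℂ := fun u s =>
    a u * (((u : ℝ) / 2 * s ^ ((u : ℝ) / 2 - 1) * (t - s) ^ (-(1 / 2 : ℝ)) : ℝ) : ℂ) with hF
  have hF_tsum : ∀ s ∈ Ioo 0 t,
      deriv y s * (((t - s) ^ (-(1 / 2 : ℝ)) : ℝ) : ℂ) = ∑' u, F u s := fun s hs => by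
    rw [deriv_eq_tsum_of_hasSum_halfPowSeries hy ⟨hs.1, hs.2.trans_le htT⟩, ← tsum_mul_right]
    simp only [hF, ofReal_mul, mul_assoc]
  have hF_zero : F 0 = fun _ => 0 := by
    funext s
    simp [hF]
  have hF_int : ∀ u, IntegrableOn (F u) (Ioo 0 t) := by
    rintro (_ | v)
    · rw [hF_zero]
      exact integrableOn_zero
    · exact ((integrableOn_Ioo_mul_rpow_mul_sub_rpow (by positivity) (by norm_num) ht0).ofReal
        ).const_mul _
  have hF_integral : ∀ v, ∫ s in Ioo 0 t, F (v + 1) s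
      = Real.Gamma (1 - 1 / 2) * halfPowSeries (halfDerivCoeff a) t v := fun v =>
    integral_Ioo_const_mul_caputo_half_term ht0 (a (v + 1)) v
  have hF_norm : ∀ u, ∫ s in Ioo 0 t, ‖F u s‖ = ‖∫ s in Ioo 0 t, F u s‖ := fun u =>
    integral_norm_mul_ofReal ((ae_restrict_mem measurableSet_Ioo).mono fun s hs => by
      have := hs.1; have := sub_pos.2 hs.2; positivity) _
  have hsum := hasSum_integral_of_summable_integral_norm hF_int <| (summable_nat_add_iff 1).1 <| by
    simpa only [hF_norm, hF_integral] using (hD.mul_left _).norm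
  have hshift := (hasSum_nat_add_iff' 1).2 hsum
  simp only [Finset.range_one, Finset.sum_singleton, hF_zero, integral_zero,
    sub_zero, hF_integral] at hshift
  have hΓ : (Real.Gamma (1 - 1 / 2) : ℂ) ≠ 0 :=
    ofReal_ne_zero.2 (Real.Gamma_pos_of_pos (by norm_num)).ne'
  rw [caputoC, intervalIntegral.integral_of_le ht0.le, integral_Ioc_eq_integral_Ioo,
    setIntegral_congr_fun measurableSet_Ioo hF_tsum]
  have := hshift.mul_left (Real.Gamma (1 - 1 / 2) : ℂ)⁻¹
  simp only [← mul_assoc, inv_mul_cancel₀ hΓ, one_mul] at this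
  rwa [one_div]

theorem halfDerivCoeff_eq {a c : ℕ → ℂ}
    (ha : ∀ u : ℕ, a (u + 1)
      = ((Real.Gamma (((u : ℝ) + 2) / 2) / Real.Gamma (((u : ℝ) + 3) / 2) : ℝ) : ℂ) * c u)
    (u : ℕ) : halfDerivCoeff a u = c u := by
  have h2 : Real.Gamma (((u : ℝ) + 2) / 2) ≠ 0 := (Real.Gamma_pos_of_pos (by positivity)).ne'
  have h3 : Real.Gamma (((u : ℝ) + 3) / 2) ≠ 0 := (Real.Gamma_pos_of_pos (by positivity)).ne'
  rw [halfDerivCoeff, ha, show ((u : ℝ) + 1) / 2 + 1 = ((u : ℝ) + 3) / 2 by ring,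
    show (u : ℝ) / 2 + 1 = ((u : ℝ) + 2) / 2 by ring, mul_right_comm, ← ofReal_mul,
    div_mul_div_cancel₀ h3, div_self h2, ofReal_one, one_mul]

theorem stmt19_general (T : ℝ) (B G Y : ℕ → ℂ) (b g y : ℝ → ℂ)
    (hb : ∀ t ∈ Set.Icc (0 : ℝ) T,
      HasSum (fun u : ℕ => B u * (((t ^ ((u : ℝ) / 2) : ℝ)) : ℂ)) (b t))
    (hg : ∀ t ∈ Set.Icc (0 : ℝ) T,
      HasSum (fun u : ℕ => G u * (((t ^ ((u : ℝ) / 2) : ℝ)) : ℂ)) (g t))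
    -- the recurrence `Y_{u+1} = (Γ((u+2)/2)/Γ((u+3)/2)) (G_u + Σ_{v=0}^u Y_v B_{u-v})`
    (hY : ∀ u : ℕ, Y (u + 1)
      = (((Real.Gamma (((u : ℝ) + 2) / 2) / Real.Gamma (((u : ℝ) + 3) / 2) : ℝ)) : ℂ)
          * (G u + ∑ v ∈ Finset.range (u + 1), Y v * B (u - v)))
    (hy : ∀ t ∈ Set.Icc (0 : ℝ) T,
      HasSum (fun u : ℕ => Y u * (((t ^ ((u : ℝ) / 2) : ℝ)) : ℂ)) (y t))
    -- the formal Caputo half-derivative series of `y` converges on `[0,T]`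
    (hD : ∀ t ∈ Set.Icc (0 : ℝ) T, Summable (fun u : ℕ =>
      Y (u + 1) * (((Real.Gamma (((u : ℝ) + 1) / 2 + 1) / Real.Gamma ((u : ℝ) / 2 + 1) : ℝ)) : ℂ)
        * (((t ^ ((u : ℝ) / 2) : ℝ)) : ℂ))) :
    ∀ t ∈ Set.Ioc (0 : ℝ) T, caputoC (1 / 2) y t - b t * y t = g t := by
  intro t ht
  have htT : t ∈ Icc 0 T := Ioc_subset_Icc_self ht
  have hcaputo := hasSum_caputoC_half (fun s hs => hy s (Ioc_subset_Icc_self hs)) (hD t htT) ht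
  have hrhs : HasSum (halfPowSeries (halfDerivCoeff Y) t) (g t + y t * b t) := by
    convert (hg t htT).add ((hy t htT).mul_halfPowSeries htT.1 (hb t htT)) using 1
    funext u
    simp only [halfPowSeries, halfDerivCoeff_eq hY, add_mul]
  rw [hcaputo.unique hrhs]
  ring

theorem stmt19 (T : ℝ) (hT : 0 < T) (B G Y : ℕ → ℂ) (b g y : ℝ → ℂ)
    (hb : ∀ t ∈ Set.Icc (0 : ℝ) T,
      HasSum (fun u : ℕ => B u * (((t ^ ((u : ℝ) / 2) : ℝ)) : ℂ)) (b t))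
    (hg : ∀ t ∈ Set.Icc (0 : ℝ) T,
      HasSum (fun u : ℕ => G u * (((t ^ ((u : ℝ) / 2) : ℝ)) : ℂ)) (g t))
    -- the recurrence `Y_{u+1} = (Γ((u+2)/2)/Γ((u+3)/2)) (G_u + Σ_{v=0}^u Y_v B_{u-v})`
    (hY : ∀ u : ℕ, Y (u + 1)
      = (((Real.Gamma (((u : ℝ) + 2) / 2) / Real.Gamma (((u : ℝ) + 3) / 2) : ℝ)) : ℂ)
          * (G u + ∑ v ∈ Finset.range (u + 1), Y v * B (u - v)))
    (hy : ∀ t ∈ Set.Icc (0 : ℝ) T,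
      HasSum (fun u : ℕ => Y u * (((t ^ ((u : ℝ) / 2) : ℝ)) : ℂ)) (y t))
    -- the formal Caputo half-derivative series of `y` converges on `[0,T]`
    (hD : ∀ t ∈ Set.Icc (0 : ℝ) T, Summable (fun u : ℕ =>
      Y (u + 1) * (((Real.Gamma (((u : ℝ) + 1) / 2 + 1) / Real.Gamma ((u : ℝ) / 2 + 1) : ℝ)) : ℂ)
        * (((t ^ ((u : ℝ) / 2) : ℝ)) : ℂ))) :
    ∀ t ∈ Set.Ioc (0 : ℝ) T, caputoC (1 / 2) y t - b t * y t = g t :=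
  stmt19_general T B G Y b g y hb hg hY hy hD
end
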